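/- Let (a_i)_{i≥1}, (b_i)_{i≥0}, (λ_i)_{i≥1}, (c_i)_{i≥1} be sequences of complex numbers satisfying the type R_II conditions. Then, inside RatFunc ℂ, the ℂ-subspace W spanned by {x^n Q_m(x) : n, m ≥ 0} equals the ℂ-subspace W' spanned by {x^n/d_m(x) : n, m ≥ 0}. -/
import Mathlib


open Polynomial

/-- The polynomials `P_n` defined by `P_0 = 1`, `P_1 = x - b_0` and
`P_{n+1} = (x - b_n) P_n - (c_n x² + a_n x + λ_n) P_{n-1}` (so `P_{-1} = 0`). -/
noncomputable def Ppoly {R : Type*} [CommRing R] (a b lam c : ℕ → R) : ℕ → Polynomial R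
  | 0 => 1
  | 1 => X - C (b 0)
  | n + 2 =>
      (X - C (b (n + 1))) * Ppoly a b lam c (n + 1) -
        (C (c (n + 1)) * X ^ 2 + C (a (n + 1)) * X + C (lam (n + 1))) * Ppoly a b lam c n

/-- `d_m(x) = ∏_{i=1}^m (c_i x² + a_i x + λ_i)`, with `d_0 = 1`. -/
noncomputable def dpoly {R : Type*} [CommRing R] (a lam c : ℕ → R) (m : ℕ) : Polynomial R :=
  ∏ i ∈ Finset.range m, (C (c (i + 1)) * X ^ 2 + C (a (i + 1)) * X + C (lam (i + 1)))
/-- `Q_m = P_m / d_m` as an element of the field `RatFunc ℂ`. -/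
noncomputable def Qfun (a b lam c : ℕ → ℂ) (m : ℕ) : RatFunc ℂ :=
  algebraMap (Polynomial ℂ) (RatFunc ℂ) (Ppoly a b lam c m) /
    algebraMap (Polynomial ℂ) (RatFunc ℂ) (dpoly a lam c m)

/-- `W`, the ℂ-subspace of `RatFunc ℂ` spanned by `{x^n Q_m : n, m ≥ 0}`. -/
noncomputable def Wspace (a b lam c : ℕ → ℂ) : Submodule ℂ (RatFunc ℂ) :=
  Submodule.span ℂ {f | ∃ n m : ℕ, f = RatFunc.X ^ n * Qfun a b lam c m}

/-- `W'`, the ℂ-subspace of `RatFunc ℂ` spanned by `{x^n / d_m : n, m ≥ 0}`. -/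
noncomputable def W'space (a lam c : ℕ → ℂ) : Submodule ℂ (RatFunc ℂ) :=
  Submodule.span ℂ
    {f | ∃ n m : ℕ, f = RatFunc.X ^ n / algebraMap (Polynomial ℂ) (RatFunc ℂ) (dpoly a lam c m)}

/-- The type `R_II` conditions: for every `n ≥ 1`, `c_n ≠ 0` and `P_n(z) ≠ 0` for every
root `z` of `c_n x² + a_n x + λ_n`. -/
def RIIConds (a b lam c : ℕ → ℂ) : Prop :=
  ∀ n : ℕ, 1 ≤ n → c n ≠ 0 ∧
    ∀ z : ℂ, c n * z ^ 2 + a n * z + lam n = 0 →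
      Polynomial.eval z (Ppoly a b lam c n) ≠ 0

lemma span_poly_mul {s : Set (RatFunc ℂ)} {f : RatFunc ℂ}
    (hf : ∀ n : ℕ, RatFunc.X ^ n * f ∈ Submodule.span ℂ s) (p : Polynomial ℂ) (n : ℕ) :
    algebraMap (Polynomial ℂ) (RatFunc ℂ) p * (RatFunc.X ^ n * f) ∈ Submodule.span ℂ s := by
  induction p using Polynomial.induction_on' with
  | add p q hp hq => rw [map_add, add_mul]; exact Submodule.add_mem _ hp hq
  | monomial k r =>
    have : algebraMap (Polynomial ℂ) (RatFunc ℂ) (Polynomial.monomial k r) * (RatFunc.X ^ n * f)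
        = r • (RatFunc.X ^ (k + n) * f) := by
      rw [← Polynomial.C_mul_X_pow_eq_monomial, map_mul, map_pow, RatFunc.algebraMap_C,
        RatFunc.algebraMap_X, RatFunc.smul_eq_C_mul, pow_add]
      ring
    rw [this]
    exact Submodule.smul_mem _ _ (hf _)

/-- For sequences satisfying the type `R_II` conditions, inside `RatFunc ℂ` the
ℂ-subspace `W` spanned by `{x^n Q_m : n, m ≥ 0}` equals the ℂ-subspace `W'` spanned by
`{x^n / d_m : n, m ≥ 0}`. -/
theorem stmt1 (a b lam c : ℕ → ℂ) (h : RIIConds a b lam c) :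
    Wspace a b lam c = W'space a lam c := by
  set AM := algebraMap (Polynomial ℂ) (RatFunc ℂ)
  have hdne : ∀ m, dpoly a lam c m ≠ 0 := by
    intro m
    refine Finset.prod_ne_zero_iff.2 fun i _ => ?_
    intro h0
    have := congrArg (fun p => Polynomial.coeff p 2) h0
    simp at this
    exact (h (i + 1) (Nat.le_add_left 1 i)).1 this
  have hgen' : ∀ n m : ℕ, RatFunc.X ^ n / AM (dpoly a lam c m) ∈ W'space a lam c := by
    intro n m
    exact Submodule.subset_span ⟨n, m, rfl⟩
  have hgen : ∀ n m : ℕ, RatFunc.X ^ n * Qfun a b lam c m ∈ Wspace a b lam c := by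
    intro n m
    exact Submodule.subset_span ⟨n, m, rfl⟩
  have hW' : ∀ (p : Polynomial ℂ) (n m : ℕ),
      AM p * (RatFunc.X ^ n / AM (dpoly a lam c m)) ∈ W'space a lam c := by
    intro p n m
    rw [div_eq_mul_inv]
    exact span_poly_mul (fun k => by rw [← div_eq_mul_inv]; exact hgen' k m) p n
  have hW : ∀ (p : Polynomial ℂ) (n m : ℕ),
      AM p * (RatFunc.X ^ n * Qfun a b lam c m) ∈ Wspace a b lam c := by
    intro p n m
    exact span_poly_mul (fun k => hgen k m) p n
  apply le_antisymm
  · rw [Wspace, Submodule.span_le]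
    rintro _ ⟨n, m, rfl⟩
    have : RatFunc.X ^ n * Qfun a b lam c m
        = AM (Ppoly a b lam c m) * (RatFunc.X ^ n / AM (dpoly a lam c m)) := by
      rw [Qfun]; ring
    exact this ▸ hW' _ n m
  · rw [W'space, Submodule.span_le]
    rintro _ ⟨n, m, rfl⟩
    induction m generalizing n with
    | zero =>
      have h1 : RatFunc.X ^ n / AM (dpoly a lam c 0) = RatFunc.X ^ n * Qfun a b lam c 0 := by
        simp [dpoly, Qfun, Ppoly]
      exact h1 ▸ hgen n 0
    | succ m ih =>
      set u : Polynomial ℂ :=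
        C (c (m + 1)) * X ^ 2 + C (a (m + 1)) * X + C (lam (m + 1)) with hu
      have hu0 : u ≠ 0 := by
        intro h0
        have := congrArg (fun p => Polynomial.coeff p 2) h0
        simp [hu] at this
        exact (h (m + 1) (Nat.le_add_left 1 m)).1 this
      have hcop : IsCoprime (Ppoly a b lam c (m + 1)) u := by
        rw [Polynomial.isCoprime_iff_aeval_ne_zero_of_isAlgClosed (k := ℂ) (K := ℂ)]
        intro z
        by_cases hz : Polynomial.aeval z u = 0
        · left
          have hz' : c (m + 1) * z ^ 2 + a (m + 1) * z + lam (m + 1) = 0 := by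
            have := hz
            rw [hu] at this
            simpa [Polynomial.coe_aeval_eq_eval] using this
          have h2 := (h (m + 1) (Nat.le_add_left 1 m)).2 z hz'
          simpa [Polynomial.coe_aeval_eq_eval] using h2
        · right; exact hz
      obtain ⟨f, g, hfg⟩ := hcop
      have hfg' : AM f * AM (Ppoly a b lam c (m + 1)) + AM g * AM u = 1 := by
        have := congrArg AM hfg
        simpa [map_add, map_mul] using this
      have hd : dpoly a lam c (m + 1) = dpoly a lam c m * u := by
        rw [dpoly, Finset.prod_range_succ]; rfl
      have hDm : AM (dpoly a lam c m) ≠ 0 := RatFunc.algebraMap_ne_zero (hdne m)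
      have hU : AM u ≠ 0 := RatFunc.algebraMap_ne_zero hu0
      have key : RatFunc.X ^ n / AM (dpoly a lam c (m + 1))
          = AM f * (RatFunc.X ^ n * Qfun a b lam c (m + 1))
            + AM g * (RatFunc.X ^ n / AM (dpoly a lam c m)) := by
        rw [Qfun, hd, map_mul]
        calc RatFunc.X ^ n / (AM (dpoly a lam c m) * AM u)
            = (AM f * AM (Ppoly a b lam c (m + 1)) + AM g * AM u)
              * RatFunc.X ^ n / (AM (dpoly a lam c m) * AM u) := by rw [hfg', one_mul]
          _ = AM f * (RatFunc.X ^ n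
                * (AM (Ppoly a b lam c (m + 1)) / (AM (dpoly a lam c m) * AM u)))
              + AM g * (RatFunc.X ^ n * AM u / (AM (dpoly a lam c m) * AM u)) := by
                ring
          _ = AM f * (RatFunc.X ^ n
                * (AM (Ppoly a b lam c (m + 1)) / (AM (dpoly a lam c m) * AM u)))
              + AM g * (RatFunc.X ^ n / AM (dpoly a lam c m)) := by
                rw [mul_div_mul_right _ _ hU]
      have h2 : AM g * (RatFunc.X ^ n / AM (dpoly a lam c m)) ∈ Wspace a b lam c := by
        rw [div_eq_mul_inv]
        exact span_poly_mul (fun k => by rw [← div_eq_mul_inv]; exact ih k) g n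
      rw [SetLike.mem_coe, key]
      exact Submodule.add_mem _ (hW f n (m + 1)) h2
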